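/- (LH++ model, conditional-independence representation) The loss exceedance probability admits the integral representation P(L > α) = ∑_{k=0}^n C(n,k) · ∫_{−∞}^{A(α,k)} Φ((c_0 − √ρ_0·v)/√(1−ρ_0))^k · (1 − Φ((c_0 − √ρ_0·v)/√(1−ρ_0)))^{n−k} · φ(v) dv, where φ is the standard normal density and C(n,k) the binomial coefficient. -/

import Mathlib

open MeasureTheory ProbabilityTheory

/-- The standard normal cumulative distribution function `Φ`. -/
noncomputable def Phi (x : ℝ) : ℝ := (gaussianReal 0 1 (Set.Iic x)).toReal

/-- The inverse of the standard normal cdf. -/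
noncomputable def PhiInv : ℝ → ℝ := Function.invFun Phi

/-- The threshold `A(α,k)` of the LH++ model, in the extended reals, with the conventions
`Φ⁻¹(0) = −∞` (so `A = +∞` and the integral below is over all of `ℝ`) and `Φ⁻¹(1) = +∞`
(so `A = −∞` and the integral is `0`). -/
noncomputable def Athr (c ρ N R N0 R0 α : ℝ) (k : ℕ) : EReal :=
  if max 0 (min 1 ((α - k * N0 * (1 - R0)) / (N * (1 - R)))) ≤ 0 then ⊤
  else if 1 ≤ max 0 (min 1 ((α - k * N0 * (1 - R0)) / (N * (1 - R)))) then ⊥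
  else ((c - Real.sqrt (1 - ρ) *
      PhiInv (max 0 (min 1 ((α - k * N0 * (1 - R0)) / (N * (1 - R)))))) / Real.sqrt ρ : ℝ)

/-! Conditionally on the systematic factor `V = v`, the default indicators `1{X_k ≤ c₀}` are
i.i.d. Bernoulli with parameter `Φ(a v)`, `a v = (c₀ - √ρ₀ v) / √(1 - ρ₀)`, so the number `K` of
defaults is binomial. The loss exceeds `α` iff `t_K < Φ((c - √ρ v) / √(1 - ρ))` with
`t_k = (α - k N₀ (1 - R₀)) / (N (1 - R))`; as `Φ` is a continuous increasing bijection
`ℝ → (0, 1)`, this is the half-line `v < A(α, k)`, up to a null set and the clamping of `t_k`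
to `[0, 1]`. Fubini over the product law of `(ξ, V)` and a sum over `K = k` give the formula. -/

open Set

namespace ProbabilityTheory

variable (μ : Measure ℝ) [IsProbabilityMeasure μ]

lemma continuous_cdf [NullSingletonClass μ] : Continuous (cdf μ) := by
  refine continuous_iff_continuousAt.2 fun x => ?_
  rw [(monotone_cdf μ).continuousAt_iff_leftLim_eq_rightLim, StieltjesFunction.rightLim_eq]
  have h := (cdf μ).measure_singleton x
  rw [measure_cdf, measure_singleton, eq_comm, ENNReal.ofReal_eq_zero, sub_nonpos] at h
  exact le_antisymm ((monotone_cdf μ).leftLim_le le_rfl) h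

lemma strictMono_cdf [μ.IsOpenPosMeasure] : StrictMono (cdf μ) := by
  intro x y hxy
  have h := (cdf μ).measure_Ioc x y
  rw [measure_cdf] at h
  have hpos : 0 < μ (Ioc x y) :=
    (measure_mono Ioo_subset_Ioc_self).trans_lt' (isOpen_Ioo.measure_pos μ (nonempty_Ioo.2 hxy))
  rw [h, ENNReal.ofReal_pos, sub_pos] at hpos
  exact hpos

lemma cdf_pos [μ.IsOpenPosMeasure] (x : ℝ) : 0 < cdf μ x :=
  (cdf_nonneg μ (x - 1)).trans_lt (strictMono_cdf μ (by linarith))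

lemma cdf_lt_one [μ.IsOpenPosMeasure] (x : ℝ) : cdf μ x < 1 :=
  (strictMono_cdf μ (by linarith : x < x + 1)).trans_le (cdf_le_one μ _)

lemma mem_range_cdf [NullSingletonClass μ] {t : ℝ} (h0 : 0 < t) (h1 : t < 1) :
    t ∈ range (cdf μ) := by
  obtain ⟨a, ha⟩ := ((tendsto_cdf_atBot μ).eventually (eventually_lt_nhds h0)).exists
  obtain ⟨b, hb⟩ := ((tendsto_cdf_atTop μ).eventually (eventually_gt_nhds h1)).exists
  exact mem_range_of_exists_le_of_exists_ge (continuous_cdf μ) ⟨a, ha.le⟩ ⟨b, hb.le⟩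

end ProbabilityTheory

section

variable {ι α β : Type*} [Fintype ι]

lemma setOf_filter_mem_eq_pi [DecidableEq ι] (s : Set α) [DecidablePred (· ∈ s)] (S : Finset ι) :
    {x : ι → α | Finset.univ.filter (fun i => x i ∈ s) = S}
      = Set.pi univ fun i => if i ∈ S then s else sᶜ := by
  ext x
  simp only [mem_ofPred_eq, Finset.ext_iff, Finset.mem_filter, Finset.mem_univ, true_and,
    Set.mem_pi, mem_univ, forall_const]
  refine forall_congr' fun i => ?_
  split_ifs with hi <;> simp [hi]

variable [MeasurableSpace α] [MeasurableSpace β]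

lemma measurable_card_filter_mem {s : β → Set α} [∀ v, DecidablePred (· ∈ s v)]
    (hs : MeasurableSet {p : α × β | p.1 ∈ s p.2}) :
    Measurable fun p : (ι → α) × β => (Finset.univ.filter fun i => p.1 i ∈ s p.2).card := by
  simp only [Finset.card_filter]
  refine Finset.measurable_sum _ fun i _ => Measurable.ite ?_ measurable_const measurable_const
  exact (by fun_prop : Measurable fun p : (ι → α) × β => (p.1 i, p.2)) hs

lemma measurableSet_setOf_mem_card_filter_mem {s : β → Set α} [∀ v, DecidablePred (· ∈ s v)]
    (hs : MeasurableSet {p : α × β | p.1 ∈ s p.2}) {T : ℕ → Set β}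
    (hT : ∀ k, MeasurableSet (T k)) :
    MeasurableSet
      {p : (ι → α) × β | p.2 ∈ T (Finset.univ.filter fun i => p.1 i ∈ s p.2).card} := by
  have hunion : {p : (ι → α) × β | p.2 ∈ T (Finset.univ.filter fun i => p.1 i ∈ s p.2).card}
      = ⋃ k, (fun p : (ι → α) × β => (Finset.univ.filter fun i => p.1 i ∈ s p.2).card) ⁻¹' {k}
          ∩ Prod.snd ⁻¹' T k := by
    ext p
    simp
  rw [hunion]
  exact .iUnion fun k =>
    (measurable_card_filter_mem hs (measurableSet_singleton k)).inter (measurable_snd (hT k))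

namespace MeasureTheory.Measure

theorem pi_setOf_card_filter_mem_eq (μ : Measure α) [SigmaFinite μ]
    {s : Set α} (hs : MeasurableSet s) [DecidablePred (· ∈ s)] (k : ℕ) :
    Measure.pi (fun _ : ι => μ) {x | (Finset.univ.filter fun i => x i ∈ s).card = k}
      = (Fintype.card ι).choose k * μ s ^ k * μ sᶜ ^ (Fintype.card ι - k) := by
  classical
  have hunion : {x : ι → α | (Finset.univ.filter fun i => x i ∈ s).card = k}
      = ⋃ S ∈ Finset.powersetCard k Finset.univ,
          {x : ι → α | Finset.univ.filter (fun i => x i ∈ s) = S} := by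
    ext x
    simp [Finset.mem_powersetCard]
  have hbox : ∀ S ∈ Finset.powersetCard k Finset.univ,
      Measure.pi (fun _ : ι => μ) {x | Finset.univ.filter (fun i => x i ∈ s) = S}
        = μ s ^ k * μ sᶜ ^ (Fintype.card ι - k) := by
    intro S hS
    rw [Finset.mem_powersetCard] at hS
    rw [setOf_filter_mem_eq_pi, pi_pi]
    simp only [apply_ite μ, Finset.prod_ite, Finset.prod_const]
    simp [Finset.filter_not, Finset.card_sdiff, hS.2]
  rw [hunion, measure_biUnion_finset, Finset.sum_congr rfl hbox, Finset.sum_const,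
    Finset.card_powersetCard, Finset.card_univ, nsmul_eq_mul, mul_assoc]
  · intro S _ T _ hST
    exact Set.disjoint_left.2 fun x hS hT => hST (hS.symm.trans hT)
  · intro S _
    rw [setOf_filter_mem_eq_pi]
    exact .univ_pi fun i => by split_ifs <;> simp [hs]

theorem pi_setOf_card_filter_mem_mem (μ : Measure α) [SigmaFinite μ]
    {s : Set α} (hs : MeasurableSet s) [DecidablePred (· ∈ s)] (K : Set ℕ) :
    Measure.pi (fun _ : ι => μ) {x | (Finset.univ.filter fun i => x i ∈ s).card ∈ K}
      = ∑ k ∈ Finset.range (Fintype.card ι + 1), K.indicator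
          (fun k => (Fintype.card ι).choose k * μ s ^ k * μ sᶜ ^ (Fintype.card ι - k)) k := by
  classical
  have hunion : {x : ι → α | (Finset.univ.filter fun i => x i ∈ s).card ∈ K}
      = ⋃ k ∈ (Finset.range (Fintype.card ι + 1)).filter (· ∈ K),
          {x : ι → α | (Finset.univ.filter fun i => x i ∈ s).card = k} := by
    ext x
    simp only [Set.mem_ofPred_eq, Set.mem_iUnion, Finset.mem_filter, Finset.mem_range, exists_prop]
    exact ⟨fun h => ⟨_, ⟨Nat.lt_succ_of_le ((Finset.card_filter_le _ _).trans_eq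
      (Finset.card_univ)), h⟩, rfl⟩, by rintro ⟨k, ⟨-, hk⟩, rfl⟩; exact hk⟩
  rw [hunion, measure_biUnion_finset, Finset.sum_filter]
  · simp only [pi_setOf_card_filter_mem_eq μ hs, Set.indicator_apply]
  · intro k _ l _ hkl
    exact Set.disjoint_left.2 fun x hk hl => hkl (hk.symm.trans hl)
  · intro k _
    have hcard := measurable_card_filter_mem (ι := ι) (s := fun _ : Unit => s) (measurable_fst hs)
    exact (hcard.comp (measurable_prodMk_right (y := ()))) (measurableSet_singleton k)

theorem prod_setOf_mem_card_filter_mem (μ : Measure α) [SigmaFinite μ] (ν : Measure β) [SFinite ν]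
    {s : β → Set α} [∀ v, DecidablePred (· ∈ s v)] (hs : MeasurableSet {p : α × β | p.1 ∈ s p.2})
    {T : ℕ → Set β} (hT : ∀ k, MeasurableSet (T k)) :
    ((Measure.pi fun _ : ι => μ).prod ν)
        {p | p.2 ∈ T (Finset.univ.filter fun i => p.1 i ∈ s p.2).card}
      = ∑ k ∈ Finset.range (Fintype.card ι + 1), (Fintype.card ι).choose k *
          ∫⁻ v in T k, μ (s v) ^ k * μ (s v)ᶜ ^ (Fintype.card ι - k) ∂ν := by
  have hE := measurableSet_setOf_mem_card_filter_mem (ι := ι) hs hT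
  have hμs : Measurable fun v => μ (s v) := measurable_measure_prodMk_right hs
  have hμsc : Measurable fun v => μ (s v)ᶜ := measurable_measure_prodMk_right hs.compl
  have hsection : ∀ v, (Measure.pi fun _ : ι => μ)
      ((fun x => (x, v)) ⁻¹' {p | p.2 ∈ T (Finset.univ.filter fun i => p.1 i ∈ s p.2).card})
      = ∑ k ∈ Finset.range (Fintype.card ι + 1), (T k).indicator
          (fun w => (Fintype.card ι).choose k * μ (s w) ^ k * μ (s w)ᶜ ^ (Fintype.card ι - k)) v :=
    fun v => pi_setOf_card_filter_mem_mem (ι := ι) μ (s := s v) (measurable_prodMk_right hs)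
      {k | v ∈ T k}
  rw [prod_apply_symm hE, lintegral_congr hsection, lintegral_finsetSum]
  · refine Finset.sum_congr rfl fun k _ => ?_
    simp_rw [lintegral_indicator (hT k), mul_assoc]
    exact lintegral_const_mul _ ((hμs.pow_const _).mul (hμsc.pow_const _))
  · exact fun k _ =>
      ((measurable_const.mul (hμs.pow_const _)).mul (hμsc.pow_const _)).indicator (hT k)

end MeasureTheory.Measure

namespace ProbabilityTheory

variable {Ω : Type*} [MeasurableSpace Ω]

theorem map_prodMk_eq_pi_prod_of_iIndepFun_option {P : Measure Ω} [IsProbabilityMeasure P]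
    {V : Ω → β} {ξ : ι → Ω → β} (hV : Measurable V) (hξ : ∀ i, Measurable (ξ i))
    (hindep : iIndepFun (fun o : Option ι => o.elim V ξ) P) :
    P.map (fun ω => (fun i => ξ i ω, V ω)) = (Measure.pi fun i => P.map (ξ i)).prod (P.map V) := by
  have hmeas : ∀ o : Option ι, Measurable (o.elim V ξ) := fun o => by cases o <;> simp [hV, hξ]
  have hpi := (iIndepFun_iff_map_fun_eq_pi_map fun o => (hmeas o).aemeasurable).1 hindep
  let e := MeasurableEquiv.piOptionEquivProd fun _ : Option ι => β
  have hcomp : (fun ω => (fun i => ξ i ω, V ω)) = e ∘ fun ω o => o.elim V ξ ω := rfl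
  rw [hcomp, ← Measure.map_map e.measurable (measurable_pi_lambda _ hmeas), hpi,
    ← Measure.pi_map_piOptionEquivProd, Measure.map_map e.measurable e.symm.measurable,
    e.self_comp_symm, Measure.map_id]
  rfl

theorem measure_setOf_mem_card_filter_mem {P : Measure Ω} [IsProbabilityMeasure P]
    {V : Ω → β} {ξ : ι → Ω → β} (hV : Measurable V) (hξ : ∀ i, Measurable (ξ i))
    (hindep : iIndepFun (fun o : Option ι => o.elim V ξ) P)
    {μ : Measure β} [SigmaFinite μ] (hξlaw : ∀ i, P.map (ξ i) = μ)
    {s : β → Set β} [∀ v, DecidablePred (· ∈ s v)] (hs : MeasurableSet {p : β × β | p.1 ∈ s p.2})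
    {T : ℕ → Set β} (hT : ∀ k, MeasurableSet (T k)) :
    P {ω | V ω ∈ T (Finset.univ.filter fun i => ξ i ω ∈ s (V ω)).card}
      = ∑ k ∈ Finset.range (Fintype.card ι + 1), (Fintype.card ι).choose k *
          ∫⁻ v in T k, μ (s v) ^ k * μ (s v)ᶜ ^ (Fintype.card ι - k) ∂(P.map V) := by
  have hmeas : Measurable fun ω => (fun i => ξ i ω, V ω) := (measurable_pi_lambda _ hξ).prodMk hV
  rw [← Set.preimage_ofPred_eq (f := fun ω => (fun i => ξ i ω, V ω))
      (p := fun p => p.2 ∈ T (Finset.univ.filter fun i => p.1 i ∈ s p.2).card),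
    ← Measure.map_apply hmeas (measurableSet_setOf_mem_card_filter_mem hs hT),
    map_prodMk_eq_pi_prod_of_iIndepFun_option hV hξ hindep, funext hξlaw,
    Measure.prod_setOf_mem_card_filter_mem μ _ hs hT]

end ProbabilityTheory

end

lemma Phi_eq_cdf : Phi = cdf (gaussianReal 0 1) := funext fun x => (cdf_eq_real _ x).symm

instance : (gaussianReal 0 1).IsOpenPosMeasure :=
  (gaussianReal_absolutelyContinuous' 0 one_ne_zero).isOpenPosMeasure

instance : NullSingletonClass (gaussianReal 0 1) := nullSingletonClass_gaussianReal one_ne_zero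

@[fun_prop]
lemma measurable_Phi : Measurable Phi := Phi_eq_cdf ▸ (monotone_cdf _).measurable

lemma strictMono_Phi : StrictMono Phi := Phi_eq_cdf ▸ strictMono_cdf _

lemma Phi_pos (x : ℝ) : 0 < Phi x := Phi_eq_cdf ▸ cdf_pos _ x

lemma Phi_lt_one (x : ℝ) : Phi x < 1 := Phi_eq_cdf ▸ cdf_lt_one _ x

lemma Phi_PhiInv {t : ℝ} (h0 : 0 < t) (h1 : t < 1) : Phi (PhiInv t) = t :=
  Function.invFun_eq (Phi_eq_cdf ▸ mem_range_cdf _ h0 h1)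

lemma lt_Phi_iff {t : ℝ} (h0 : 0 < t) (h1 : t < 1) (x : ℝ) : t < Phi x ↔ PhiInv t < x := by
  conv_lhs => rw [← Phi_PhiInv h0 h1]
  exact strictMono_Phi.lt_iff_lt

lemma gaussianReal_Iic (x : ℝ) : gaussianReal 0 1 (Iic x) = ENNReal.ofReal (Phi x) := by
  rw [Phi_eq_cdf, ofReal_cdf]

lemma gaussianReal_compl_Iic (x : ℝ) :
    gaussianReal 0 1 (Iic x)ᶜ = ENNReal.ofReal (1 - Phi x) := by
  rw [prob_compl_eq_one_sub measurableSet_Iic, gaussianReal_Iic, ← ENNReal.ofReal_one,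
    ENNReal.ofReal_sub _ (Phi_pos x).le]

lemma toReal_setLIntegral_ofReal_gaussianReal (m : ℝ) {v : NNReal} (hv : v ≠ 0) {s : Set ℝ}
    (hs : MeasurableSet s) {f : ℝ → ℝ} (hf : Measurable f) (hf0 : ∀ x, 0 ≤ f x) :
    (∫⁻ x in s, ENNReal.ofReal (f x) ∂gaussianReal m v).toReal
      = ∫ x in s, f x * gaussianPDFReal m v x := by
  rw [gaussianReal_of_var_ne_zero m hv, restrict_withDensity hs,
    lintegral_withDensity_eq_lintegral_mul _ (measurable_gaussianPDF m v) hf.ennreal_ofReal,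
    integral_eq_lintegral_of_nonneg_ae
      (.of_forall fun x => mul_nonneg (hf0 x) (gaussianPDFReal_nonneg m v x))
      (hf.mul (measurable_gaussianPDFReal m v)).aestronglyMeasurable]
  congr 1
  refine lintegral_congr fun x => ?_
  rw [Pi.mul_apply, gaussianPDF, ← ENNReal.ofReal_mul (gaussianPDFReal_nonneg m v x), mul_comm]

lemma toReal_setLIntegral_gaussianReal_Iic_pow_mul {s : Set ℝ} (hs : MeasurableSet s)
    {a : ℝ → ℝ} (ha : Measurable a) (n k : ℕ) :
    (∫⁻ v in s, gaussianReal 0 1 (Iic (a v)) ^ k * gaussianReal 0 1 (Iic (a v))ᶜ ^ (n - k)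
        ∂gaussianReal 0 1).toReal
      = ∫ v in s, Phi (a v) ^ k * (1 - Phi (a v)) ^ (n - k) * gaussianPDFReal 0 1 v := by
  have hPhi0 : ∀ v, 0 ≤ 1 - Phi (a v) := fun v => sub_nonneg.2 (Phi_lt_one _).le
  rw [← toReal_setLIntegral_ofReal_gaussianReal 0 one_ne_zero hs (by fun_prop)
    fun v => mul_nonneg (pow_nonneg (Phi_pos _).le _) (pow_nonneg (hPhi0 v) _)]
  congr 2 with v
  rw [gaussianReal_Iic, gaussianReal_compl_Iic, ENNReal.ofReal_mul (pow_nonneg (Phi_pos _).le _),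
    ENNReal.ofReal_pow (Phi_pos _).le, ENNReal.ofReal_pow (hPhi0 v)]

lemma setOf_lt_Phi_eq_Iio {ρ : ℝ} (hρ : ρ ∈ Ioo 0 1) (c : ℝ) {t : ℝ} (h0 : 0 < t) (h1 : t < 1) :
    {v : ℝ | t < Phi ((c - √ρ * v) / √(1 - ρ))} = Iio ((c - √(1 - ρ) * PhiInv t) / √ρ) := by
  have hsρ : 0 < √ρ := Real.sqrt_pos.2 hρ.1
  have hsρ' : 0 < √(1 - ρ) := Real.sqrt_pos.2 (sub_pos.2 hρ.2)
  ext v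
  rw [mem_ofPred_eq, lt_Phi_iff h0 h1, lt_div_iff₀ hsρ', mem_Iio, lt_div_iff₀' hsρ]
  constructor <;> intro h <;> linarith

lemma setOf_lt_Phi_ae_eq_setOf_le_Athr {ρ : ℝ} (hρ : ρ ∈ Ioo 0 1) (c N R N0 R0 α : ℝ) (k : ℕ) :
    {v : ℝ | (α - k * N0 * (1 - R0)) / (N * (1 - R)) < Phi ((c - √ρ * v) / √(1 - ρ))}
      =ᵐ[gaussianReal 0 1] {v : ℝ | (v : EReal) ≤ Athr c ρ N R N0 R0 α k} := by
  unfold Athr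
  set t := (α - k * N0 * (1 - R0)) / (N * (1 - R))
  rcases le_or_gt t 0 with h0 | h0
  · have hclamp : max 0 (min 1 t) ≤ 0 := max_le le_rfl (min_le_of_right_le h0)
    have hall : ∀ v, t < Phi ((c - √ρ * v) / √(1 - ρ)) := fun v => h0.trans_lt (Phi_pos _)
    simp [hclamp, hall]
  rcases le_or_gt 1 t with h1 | h1
  · have hclamp : max 0 (min 1 t) = 1 := by simp [min_eq_left h1]
    have hnone : ∀ v, ¬ t < Phi ((c - √ρ * v) / √(1 - ρ)) :=
      fun v => not_lt.2 ((Phi_lt_one _).le.trans h1)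
    simp [hclamp, hnone, not_le.2 zero_lt_one]
  · have hclamp : max 0 (min 1 t) = t := by simp [min_eq_right h1.le, h0.le]
    simp only [hclamp, if_neg h0.not_ge, if_neg h1.not_ge, EReal.coe_le_coe_iff]
    rw [setOf_lt_Phi_eq_Iio hρ c h0 h1]
    exact Iio_ae_eq_Iic

lemma lhpp_setOf_lt_loss_eq {Ω : Type*} {n : ℕ} {V : Ω → ℝ} {ξ X : Fin n → Ω → ℝ} {L : Ω → ℝ}
    {ρ ρ0 c c0 R R0 N N0 α : ℝ} (hρ0 : ρ0 < 1) (hNR : 0 < N * (1 - R))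
    (hX : ∀ i, X i = fun ω => √ρ0 * V ω + √(1 - ρ0) * ξ i ω)
    (hL : L = fun ω =>
      (∑ i : Fin n, N0 * (1 - R0) * Set.indicator {ω' | X i ω' ≤ c0} (fun _ => (1 : ℝ)) ω)
        + N * (1 - R) * Phi ((c - √ρ * V ω) / √(1 - ρ))) :
    {ω | α < L ω} = {ω | (α - (Finset.univ.filter fun i =>
        ξ i ω ∈ Iic ((c0 - √ρ0 * V ω) / √(1 - ρ0))).card * N0 * (1 - R0)) / (N * (1 - R))
      < Phi ((c - √ρ * V ω) / √(1 - ρ))} := by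
  have hsρ0 : 0 < √(1 - ρ0) := Real.sqrt_pos.2 (sub_pos.2 hρ0)
  ext ω
  have hdefault : ∀ i, X i ω ≤ c0 ↔ ξ i ω ∈ Iic ((c0 - √ρ0 * V ω) / √(1 - ρ0)) := fun i => by
    rw [hX, mem_Iic, le_div_iff₀' hsρ0, le_sub_iff_add_le']
  simp only [hL, mem_ofPred_eq, indicator_apply, hdefault, ← Finset.mul_sum, Finset.sum_boole]
  rw [div_lt_iff₀' hNR]
  constructor <;> intro h <;> linarith

theorem lhpp_loss_exceedance_prob_integral_general
    {Ω : Type*} [MeasureSpace Ω] [IsProbabilityMeasure (ℙ : Measure Ω)]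
    (n : ℕ) (V : Ω → ℝ) (ξ : Fin n → Ω → ℝ)
    (hV : Measurable V) (hξ : ∀ i, Measurable (ξ i))
    (hVlaw : Measure.map V ℙ = gaussianReal 0 1)
    (hξlaw : ∀ i, Measure.map (ξ i) ℙ = gaussianReal 0 1)
    (hindep : iIndepFun (m := fun _ => (inferInstance : MeasurableSpace ℝ))
      (fun o : Option (Fin n) => o.elim V fun i => ξ i) ℙ)
    (ρ ρ0 : ℝ) (hρ : ρ ∈ Set.Ioo (0 : ℝ) 1) (hρ0 : ρ0 ∈ Set.Ioo (0 : ℝ) 1)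
    (c c0 : ℝ) (R R0 : ℝ) (hR : R ∈ Set.Ico (0 : ℝ) 1)
    (N N0 : ℝ) (hN : 0 < N)
    (X : Fin n → Ω → ℝ)
    (hX : ∀ i, X i = fun ω => Real.sqrt ρ0 * V ω + Real.sqrt (1 - ρ0) * ξ i ω)
    (L : Ω → ℝ)
    (hL : L = fun ω =>
      (∑ i : Fin n, N0 * (1 - R0) * Set.indicator {ω' | X i ω' ≤ c0} (fun _ => (1 : ℝ)) ω)
        + N * (1 - R) * Phi ((c - Real.sqrt ρ * V ω) / Real.sqrt (1 - ρ)))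
    (α : ℝ) :
    (ℙ {ω | α < L ω}).toReal
      = ∑ k ∈ Finset.range (n + 1), (n.choose k : ℝ) *
          ∫ v in {v : ℝ | (v : EReal) ≤ Athr c ρ N R N0 R0 α k},
            Phi ((c0 - Real.sqrt ρ0 * v) / Real.sqrt (1 - ρ0)) ^ k
              * (1 - Phi ((c0 - Real.sqrt ρ0 * v) / Real.sqrt (1 - ρ0))) ^ (n - k)
              * gaussianPDFReal 0 1 v := by
  have hNR : 0 < N * (1 - R) := mul_pos hN (sub_pos.2 hR.2)
  set a : ℝ → ℝ := fun v => (c0 - √ρ0 * v) / √(1 - ρ0)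
  set T : ℕ → Set ℝ := fun k =>
    {v | (α - k * N0 * (1 - R0)) / (N * (1 - R)) < Phi ((c - √ρ * v) / √(1 - ρ))}
  have hevent : {ω | α < L ω}
      = {ω | V ω ∈ T (Finset.univ.filter fun i => ξ i ω ∈ Iic (a (V ω))).card} :=
    lhpp_setOf_lt_loss_eq hρ0.2 hNR hX hL
  have hs : MeasurableSet {p : ℝ × ℝ | p.1 ∈ Iic (a p.2)} :=
    measurableSet_le measurable_fst (by fun_prop)
  have hT : ∀ k, MeasurableSet (T k) := fun k =>
    measurableSet_lt measurable_const (measurable_Phi.comp (by fun_prop))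
  have hmixture :=
    measure_setOf_mem_card_filter_mem hV hξ hindep hξlaw (s := fun v => Iic (a v)) hs hT
  rw [hVlaw, Fintype.card_fin] at hmixture
  rw [hevent, hmixture, ENNReal.toReal_sum (ENNReal.sum_ne_top.1 (hmixture ▸ measure_ne_top _ _))]
  refine Finset.sum_congr rfl fun k _ => ?_
  have hA : MeasurableSet {v : ℝ | (v : EReal) ≤ Athr c ρ N R N0 R0 α k} :=
    measurable_coe_real_ereal measurableSet_Iic
  rw [ENNReal.toReal_mul, ENNReal.toReal_natCast,
    setLIntegral_congr (setOf_lt_Phi_ae_eq_setOf_le_Athr hρ c N R N0 R0 α k),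
    toReal_setLIntegral_gaussianReal_Iic_pow_mul hA (by fun_prop : Measurable a)]

/-- **LH++ model, conditional-independence representation.**
`P(L > α) = ∑_{k=0}^n C(n,k) · ∫_{−∞}^{A(α,k)} Φ((c₀ − √ρ₀·v)/√(1−ρ₀))^k ·
(1 − Φ((c₀ − √ρ₀·v)/√(1−ρ₀)))^{n−k} · φ(v) dv`. -/
theorem lhpp_loss_exceedance_prob_integral
    {Ω : Type*} [MeasureSpace Ω] [IsProbabilityMeasure (ℙ : Measure Ω)]
    (n : ℕ) (V : Ω → ℝ) (ξ : Fin n → Ω → ℝ)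
    (hV : Measurable V) (hξ : ∀ i, Measurable (ξ i))
    (hVlaw : Measure.map V ℙ = gaussianReal 0 1)
    (hξlaw : ∀ i, Measure.map (ξ i) ℙ = gaussianReal 0 1)
    (hindep : iIndepFun (m := fun _ => (inferInstance : MeasurableSpace ℝ))
      (fun o : Option (Fin n) => o.elim V fun i => ξ i) ℙ)
    (ρ ρ0 : ℝ) (hρ : ρ ∈ Set.Ioo (0 : ℝ) 1) (hρ0 : ρ0 ∈ Set.Ioo (0 : ℝ) 1)
    (c c0 : ℝ) (R R0 : ℝ) (hR : R ∈ Set.Ico (0 : ℝ) 1) (hR0 : R0 ∈ Set.Ico (0 : ℝ) 1)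
    (N N0 : ℝ) (hN : 0 < N) (hN0 : 0 < N0) (hsum : N + n * N0 = 1)
    (X : Fin n → Ω → ℝ)
    (hX : ∀ i, X i = fun ω => Real.sqrt ρ0 * V ω + Real.sqrt (1 - ρ0) * ξ i ω)
    (L : Ω → ℝ)
    (hL : L = fun ω =>
      (∑ i : Fin n, N0 * (1 - R0) * Set.indicator {ω' | X i ω' ≤ c0} (fun _ => (1 : ℝ)) ω)
        + N * (1 - R) * Phi ((c - Real.sqrt ρ * V ω) / Real.sqrt (1 - ρ)))
    (α : ℝ) :
    (ℙ {ω | α < L ω}).toReal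
      = ∑ k ∈ Finset.range (n + 1), (n.choose k : ℝ) *
          ∫ v in {v : ℝ | (v : EReal) ≤ Athr c ρ N R N0 R0 α k},
            Phi ((c0 - Real.sqrt ρ0 * v) / Real.sqrt (1 - ρ0)) ^ k
              * (1 - Phi ((c0 - Real.sqrt ρ0 * v) / Real.sqrt (1 - ρ0))) ^ (n - k)
              * gaussianPDFReal 0 1 v :=
  lhpp_loss_exceedance_prob_integral_general n V ξ hV hξ hVlaw hξlaw hindep ρ ρ0 hρ hρ0 c c0 R R0 hR
    N N0 hN X hX L hL α
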